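/- arXiv:1703.03683 — 2 statements merged into one kernel-verified Lean document; each statement's English description precedes it below -/
import Mathlib

section
/- For s ∈ S_{n+1} and i ∈ {0,…,n}, the restriction of the permuted simplex σ ∘ s̄ to the i-th face of Δⁿ equals the restriction of σ to the s(i)-th face followed by the induced permutation s_i ∈ S_n; consequently ∂(s̄*σ) = Σ_{i=0}^{n} (-1)^i s̄_i*(σ|_{[v₀,…,v̂_{s(i)},…,vₙ]}). -/
open Finset

/-- The standard `n`-simplex as a topological space. -/
abbrev Simp (n : ℕ) : Type := ↥(stdSimplex ℝ (Fin (n+1)))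

/-- Singular `n`-simplices of `X`. -/
abbrev Sing (n : ℕ) (X : Type*) [TopologicalSpace X] : Type _ := C(Simp n, X)

/-- The coordinate-permutation map `s̄` of the standard simplex induced by a
permutation `s`, sending barycentric coordinates `t` to `t ∘ s⁻¹`. -/
def permC {n : ℕ} (s : Equiv.Perm (Fin (n+1))) : C(Simp n, Simp n) where
  toFun t := ⟨fun j => t.1 (s⁻¹ j),
    ⟨fun j => t.2.1 _, by simpa using (Equiv.sum_comp (s⁻¹) t.1).trans t.2.2⟩⟩
  continuous_toFun := by
    apply Continuous.subtype_mk
    exact continuous_pi fun j => (continuous_apply (s⁻¹ j)).comp continuous_subtype_val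

/-- The affine map of standard simplices induced by a map of vertices `g`. -/
def vmap {m n : ℕ} (g : Fin (m+1) → Fin (n+1)) : C(Simp m, Simp n) where
  toFun t := ⟨fun j => ∑ k, if g k = j then t.1 k else 0,
    ⟨fun j => Finset.sum_nonneg fun k _ => by
        split_ifs
        · exact t.2.1 k
        · exact le_rfl
      , by
      rw [Finset.sum_comm]
      simpa using t.2.2⟩⟩
  continuous_toFun := by
    apply Continuous.subtype_mk
    exact continuous_pi fun j => continuous_finset_sum _ fun k _ => by
      split_ifs
      · exact (continuous_apply k).comp continuous_subtype_val
      · exact continuous_const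

/-- The `i`-th face inclusion of the standard simplex. -/
def faceMap {n : ℕ} (i : Fin (n+2)) : C(Simp n, Simp (n+1)) := vmap i.succAbove

/-- Singular `n`-cochains with coefficients in `G` (as `Hom` from the free
abelian group on singular simplices, i.e. functions on singular simplices). -/
abbrev SCochain (n : ℕ) (X : Type*) [TopologicalSpace X] (G : Type*) [AddCommGroup G] : Type _ :=
  Sing n X → G

variable {X Y : Type*} [TopologicalSpace X] [TopologicalSpace Y]
variable {G : Type*} [AddCommGroup G]

/-- The singular coboundary operator. -/
def cob {n : ℕ} (α : SCochain n X G) : SCochain (n+1) X G :=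
  fun σ => ∑ i : Fin (n+2), (-1 : ℤ)^(i : ℕ) • α (σ.comp (faceMap i))

/-- A cochain is alternative (oriented) if permuting the vertices of a singular
simplex multiplies its value by the sign of the permutation. -/
def IsAlt {n : ℕ} (α : SCochain n X G) : Prop :=
  ∀ (σ : Sing n X) (s : Equiv.Perm (Fin (n+1))),
    α (σ.comp (permC s)) = (Equiv.Perm.sign s : ℤ) • α σ

/-- The alternative-maker (antisymmetrization) operator on rational cochains. -/
def Aop {n : ℕ} (α : SCochain n X ℚ) : SCochain n X ℚ :=
  fun σ => ((n+1).factorial : ℚ)⁻¹ *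
    ∑ s : Equiv.Perm (Fin (n+1)), ((Equiv.Perm.sign s : ℤ) : ℚ) * α (σ.comp (permC s))

/-- The ordinary singular cup product. -/
def cup {p q : ℕ} (α : SCochain p X ℚ) (β : SCochain q X ℚ) : SCochain (p+q) X ℚ :=
  fun σ =>
    α (σ.comp (vmap (fun k : Fin (p+1) => Fin.castLE (by omega) k))) *
    β (σ.comp (vmap (fun k : Fin (q+1) => ⟨p + k, by omega⟩)))

/-- The alternative (modified) cup product. -/
def cupA {p q : ℕ} (α : SCochain p X ℚ) (β : SCochain q X ℚ) : SCochain (p+q) X ℚ :=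
  Aop (cup α β)

/-- Reindexing of cochains along an equality of degrees. -/
def ccast {m n : ℕ} (h : m = n) (α : SCochain m X G) : SCochain n X G :=
  fun σ => α (σ.comp (vmap (fun k : Fin (m+1) => Fin.cast (by omega) k)))

/-- The permutation of `{0,…,n-1}` induced by `s ∈ S_{n+1}` by deleting `i`
from the domain, `s i` from the range, and renumbering. -/
def inducedPerm {n : ℕ} (s : Equiv.Perm (Fin (n+2))) (i : Fin (n+2)) :
    Equiv.Perm (Fin (n+1)) :=
  Equiv.removeNone ((finSuccEquiv' i).symm.trans (s.trans (finSuccEquiv' (s i))))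

/-- Singular `n`-chains: the free abelian group on singular `n`-simplices. -/
abbrev SChain (n : ℕ) (X : Type*) [TopologicalSpace X] : Type _ := Sing n X →₀ ℤ

/-- The singular boundary operator. -/
noncomputable def bnd {n : ℕ} : SChain (n+1) X →+ SChain n X :=
  Finsupp.liftAddHom fun σ => zmultiplesHom _
    (∑ i : Fin (n+2), (-1 : ℤ)^(i : ℕ) • Finsupp.single (σ.comp (faceMap i)) (1 : ℤ))

/-- The subgroup `U_n(X)` generated by the elements `σ∘s̄ − sign(s)·σ`. -/
noncomputable def Urel (n : ℕ) (X : Type*) [TopologicalSpace X] : AddSubgroup (SChain n X) :=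
  AddSubgroup.closure {x | ∃ (σ : Sing n X) (s : Equiv.Perm (Fin (n+1))),
    x = Finsupp.single (σ.comp (permC s)) 1 - (Equiv.Perm.sign s : ℤ) • Finsupp.single σ 1}

/-- The pullback of cochains along a continuous map. -/
def pb (f : C(X, Y)) {n : ℕ} (α : SCochain n Y G) : SCochain n X G :=
  fun σ => α (f.comp σ)

lemma inducedPerm_spec {n : ℕ} (s : Equiv.Perm (Fin (n+2))) (i : Fin (n+2)) (m : Fin (n+1)) :
    s (i.succAbove m) = (s i).succAbove (inducedPerm s i m) := by
  have hne : s (i.succAbove m) ≠ s i := by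
    simp [Fin.succAbove_ne i m]
  obtain ⟨k, hk⟩ := Fin.exists_succAbove_eq hne
  have he : ((finSuccEquiv' i).symm.trans (s.trans (finSuccEquiv' (s i)))) (some m) = some k := by
    simp [← hk]
  have h2 := Equiv.removeNone_some _ ⟨k, he⟩
  rw [he] at h2
  rw [← hk]
  congr 1
  exact (Option.some_injective _ h2).symm

lemma face_perm_comm {n : ℕ} (s : Equiv.Perm (Fin (n+2))) (i : Fin (n+2)) :
    (permC s).comp (faceMap i) = (faceMap (s i)).comp (permC (inducedPerm s i)) := by
  ext t j
  show ∑ k, (if i.succAbove k = s⁻¹ j then t.1 k else 0)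
      = ∑ k, if (s i).succAbove k = j then t.1 ((inducedPerm s i)⁻¹ k) else 0
  refine Fintype.sum_equiv (inducedPerm s i) _ _ fun k => ?_
  rw [show (inducedPerm s i)⁻¹ ((inducedPerm s i) k) = k from Equiv.symm_apply_apply _ _]
  congr 1
  rw [← inducedPerm_spec, ← Equiv.eq_symm_apply]
  rfl

/-- the restriction of `σ ∘ s̄` to the `i`-th face is the
restriction of `σ` to the `s i`-th face composed with the induced permutation
`s_i`; consequently `∂(s̄*σ) = Σ (-1)^i s̄_i*(σ|_{F_{s i}})`. -/
theorem statement2 {X : Type*} [TopologicalSpace X] {n : ℕ} (σ : Sing (n+1) X)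
    (s : Equiv.Perm (Fin (n+2))) :
    (∀ i : Fin (n+2), (σ.comp (permC s)).comp (faceMap i)
        = (σ.comp (faceMap (s i))).comp (permC (inducedPerm s i))) ∧
    bnd (Finsupp.single (σ.comp (permC s)) 1)
      = ∑ i : Fin (n+2), (-1 : ℤ)^(i : ℕ) •
          Finsupp.single ((σ.comp (faceMap (s i))).comp (permC (inducedPerm s i))) (1 : ℤ) := by
  have h1 : ∀ i : Fin (n+2), (σ.comp (permC s)).comp (faceMap i)
      = (σ.comp (faceMap (s i))).comp (permC (inducedPerm s i)) := by
    intro i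
    rw [ContinuousMap.comp_assoc, face_perm_comm, ← ContinuousMap.comp_assoc]
  refine ⟨h1, ?_⟩
  have h2 : bnd (Finsupp.single (σ.comp (permC s)) 1)
      = ∑ i : Fin (n+2), (-1 : ℤ)^(i : ℕ) •
          Finsupp.single ((σ.comp (permC s)).comp (faceMap i)) (1 : ℤ) := by
    simp [bnd]
  rw [h2]
  exact Finset.sum_congr rfl fun i _ => by rw [h1 i]
end

section
/- The singular coboundary operator preserves alternative cochains: if α ∈ C^{n-1}_A(X;G) satisfies α(τ ∘ s̄) = sign(s)·α(τ) for all singular (n-1)-simplices τ and all s ∈ S_n, then δα satisfies (δα)(σ ∘ s̄) = sign(s)·(δα)(σ) for all singular n-simplices σ and all s ∈ S_{n+1}. Hence the alternative cochains form a subcomplex and the alternative cohomology H_A^n(X;G) is defined. -/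
open Finset

variable {X Y : Type*} [TopologicalSpace X] [TopologicalSpace Y]
variable {G : Type*} [AddCommGroup G]

lemma permC_eq_vmap {n : ℕ} (s : Equiv.Perm (Fin (n+1))) : permC s = vmap ⇑s := by
  ext t j
  show t.1 (s⁻¹ j) = ∑ k, if s k = j then t.1 k else 0
  rw [Finset.sum_congr rfl (fun k _ => by
    rw [show (if s k = j then t.1 k else 0) = if k = s⁻¹ j then t.1 k else 0 by
      congr 1
      exact propext ⟨fun h => by simp [← h], fun h => by simp [h]⟩]),
    Finset.sum_ite_eq' Finset.univ (s⁻¹ j) t.1]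
  simp

lemma vmap_comp {l m n : ℕ} (g : Fin (m+1) → Fin (n+1)) (f : Fin (l+1) → Fin (m+1)) :
    (vmap g).comp (vmap f) = vmap (g ∘ f) := by
  ext t j
  show (∑ k, if g k = j then (∑ a, if f a = k then t.1 a else 0) else 0)
      = ∑ a, if g (f a) = j then t.1 a else 0
  have h1 : ∀ k : Fin (m+1), (if g k = j then ∑ a, if f a = k then t.1 a else 0 else 0)
      = ∑ a, if f a = k then (if g k = j then t.1 a else 0) else 0 := by
    intro k; split_ifs with h <;> simp
  rw [Finset.sum_congr rfl fun k _ => h1 k, Finset.sum_comm]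
  refine Finset.sum_congr rfl fun a _ => ?_
  rw [Finset.sum_ite_eq Finset.univ (f a) (fun x => if g x = j then t.1 a else 0)]
  simp

lemma succAbove_induced {n : ℕ} (s : Equiv.Perm (Fin (n+2))) (i : Fin (n+2)) (j : Fin (n+1)) :
    s (i.succAbove j) = (s i).succAbove (inducedPerm s i j) := by
  set e := (finSuccEquiv' i).symm.trans (s.trans (finSuccEquiv' (s i))) with he
  have hx : ∃ x', e (some j) = some x' := by
    rcases h' : e (some j) with _ | b
    · exfalso
      simp only [he, Equiv.trans_apply, finSuccEquiv'_symm_some] at h'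
      have : s (i.succAbove j) = s i := by
        have := congrArg (finSuccEquiv' (s i)).symm h'
        simpa using this
      exact Fin.succAbove_ne i j (s.injective this)
    · exact ⟨b, rfl⟩
  have h := (Equiv.removeNone_some e hx).symm
  simp only [he, Equiv.trans_apply, finSuccEquiv'_symm_some] at h
  have := congrArg (finSuccEquiv' (s i)).symm h
  simpa [inducedPerm] using this

lemma sign_induced {n : ℕ} (s : Equiv.Perm (Fin (n+2))) (i : Fin (n+2)) :
    (Equiv.Perm.sign (inducedPerm s i) : ℤ)
      = (-1)^((i : ℕ) + ((s i : ℕ))) * (Equiv.Perm.sign s : ℤ) := by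
  set t := inducedPerm s i
  have key : (Fin.cycleRange (s i)) * s * (Fin.cycleRange i)⁻¹
      = Equiv.Perm.decomposeFin.symm (0, t) := by
    ext x
    refine Fin.cases ?_ (fun j => ?_) x
    · have h0 : (Fin.cycleRange i)⁻¹ 0 = i := by
        rw [Equiv.Perm.inv_eq_iff_eq, Fin.cycleRange_self]
      simp [Equiv.Perm.mul_apply, h0]
    · have h0 : (Fin.cycleRange i)⁻¹ j.succ = i.succAbove j := by
        rw [Equiv.Perm.inv_eq_iff_eq, Fin.cycleRange_succAbove]
      simp [Equiv.Perm.mul_apply, h0, succAbove_induced s i j]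
      rfl
  have := congrArg Equiv.Perm.sign key
  simp only [map_mul, map_inv, Fin.sign_cycleRange, Equiv.Perm.decomposeFin.symm_sign,
    if_true, one_mul] at this
  rw [Int.units_inv_eq_self] at this
  have h2 : ((Equiv.Perm.sign t : ℤˣ) : ℤ) = ((-1)^((s i : ℕ)) * Equiv.Perm.sign s * ((-1)^((i:ℕ))) : ℤˣ) := by
    rw [← this]
  rw [h2]
  push_cast
  rw [pow_add]
  ring

/-- the coboundary of an alternative cochain is alternative, so
alternative cochains form a subcomplex. -/
theorem statement8 {X : Type*} [TopologicalSpace X] {G : Type*} [AddCommGroup G]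
    {n : ℕ} (α : SCochain n X G) (hα : IsAlt α) :
    IsAlt (cob α) := by
  intro σ s
  unfold cob
  have hface : ∀ i : Fin (n+2),
      (σ.comp (permC s)).comp (faceMap i)
        = (σ.comp (faceMap (s i))).comp (permC (inducedPerm s i)) := by
    intro i
    rw [ContinuousMap.comp_assoc, ContinuousMap.comp_assoc]
    congr 1
    rw [permC_eq_vmap, permC_eq_vmap]
    unfold faceMap
    rw [vmap_comp, vmap_comp]
    congr 1
    funext j
    exact succAbove_induced s i j
  calc ∑ i : Fin (n+2), (-1:ℤ)^(i:ℕ) • α ((σ.comp (permC s)).comp (faceMap i))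
      = ∑ i : Fin (n+2), (Equiv.Perm.sign s : ℤ) •
          ((-1:ℤ)^((s i : ℕ)) • α (σ.comp (faceMap (s i)))) := by
        refine Finset.sum_congr rfl fun i _ => ?_
        rw [hface i, hα, sign_induced, smul_smul, smul_smul]
        congr 1
        have h1 : ((-1:ℤ)^(i:ℕ))*(-1:ℤ)^(i:ℕ) = 1 := by
          rw [← pow_add, ← two_mul, pow_mul]; norm_num
        rw [pow_add]
        linear_combination ((-1:ℤ)^((s i : ℕ)) * (Equiv.Perm.sign s : ℤ)) * h1
    _ = (Equiv.Perm.sign s : ℤ) •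
          ∑ i : Fin (n+2), (-1:ℤ)^((s i : ℕ)) • α (σ.comp (faceMap (s i))) :=
        (Finset.smul_sum).symm
    _ = (Equiv.Perm.sign s : ℤ) •
          ∑ i : Fin (n+2), (-1:ℤ)^((i : ℕ)) • α (σ.comp (faceMap i)) := by
        congr 1
        exact Equiv.sum_comp s (fun j => (-1:ℤ)^((j:ℕ)) • α (σ.comp (faceMap j)))
end
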